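/- arXiv:1905.12718 — 4 statements merged into one kernel-verified Lean document; each statement's English description precedes it below -/
import Mathlib

section
/- Fix α ∈ (0,1), ρ ∈ 𝒞 and P ∈ 𝒫^ρ. Then for every θ ∈ ℝ the denominator E[|ψ₋(Z−θ)|] is strictly positive, and the right-derivative O^ρ′_+(θ) of O^ρ at θ has the same sign as G^ρ(θ) − α: O^ρ′_+(θ) > 0 if and only if G^ρ(θ) > α, O^ρ′_+(θ) = 0 if and only if G^ρ(θ) = α, and O^ρ′_+(θ) < 0 if and only if G^ρ(θ) < α. -/
open MeasureTheory Set Filter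

noncomputable section

/-- The class `𝒞` of loss functions: convex, nonnegative, even, vanishing only at `0`. -/
def LossClass (ρ : ℝ → ℝ) : Prop :=
  ConvexOn ℝ Set.univ ρ ∧ (∀ t, 0 ≤ ρ t) ∧ (∀ t, ρ (-t) = ρ t) ∧ (∀ t, ρ t = 0 ↔ t = 0)

/-- `ψ` is the left-derivative of `ρ`. -/
def IsLeftDeriv (ρ ψ : ℝ → ℝ) : Prop :=
  ∀ x : ℝ, HasDerivWithinAt ρ (ψ x) (Set.Iio x) x

/-- The asymmetric loss `ρ_α(t) = ((1−α)·𝟙[t<0] + α·𝟙[t>0])·ρ(t)`. -/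
def rhoA (ρ : ℝ → ℝ) (α t : ℝ) : ℝ :=
  ((1 - α) * (if t < 0 then 1 else 0) + α * (if 0 < t then 1 else 0)) * ρ t

/-- The objective function `O^ρ(θ) = E[ρ_α(Z−θ) − ρ_α(Z)]`. -/
def Obj (ρ : ℝ → ℝ) (α : ℝ) (P : Measure ℝ) (θ : ℝ) : ℝ :=
  ∫ z, (rhoA ρ α (z - θ) - rhoA ρ α z) ∂P

/-- `G^ρ(θ) = E[|ψ₋(Z−θ)|·𝟙[Z ≤ θ]] / E[|ψ₋(Z−θ)|]`. -/
def Gfun (ψ : ℝ → ℝ) (P : Measure ℝ) (θ : ℝ) : ℝ :=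
  (∫ z, |ψ (z - θ)| * (if z ≤ θ then 1 else 0) ∂P) / ∫ z, |ψ (z - θ)| ∂P

/-- The order-`α` M-quantile `θ^ρ_α(P) = inf{θ : G^ρ(θ) ≥ α}`. -/
def MQuant (ψ : ℝ → ℝ) (P : Measure ℝ) (α : ℝ) : ℝ :=
  sInf {θ : ℝ | α ≤ Gfun ψ P θ}

/-! `ρ_α` is convex with left derivative `ψ_α(t) = ((1-α)𝟙[t ≤ 0] + α𝟙[t > 0]) ψ(t)`. The
difference quotients of `θ ↦ ρ_α(z - θ)` on `(θ, θ + 1)` lie between `-ψ_α(z - θ)` and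
`-ψ_α(z - θ - 1)` (convexity makes `ψ_α` monotone), so dominated convergence gives
`O^ρ'_+(θ) = -E[ψ_α(Z - θ)]`. As `ψ` has the sign of `t` away from `0` and `ψ(0) ≤ 0`, this is
`E[|ψ(Z-θ)| 𝟙[Z ≤ θ]] - α E[|ψ(Z-θ)|]`, the denominator of `G^ρ(θ)` times `G^ρ(θ) - α`. The
denominator is positive because `|ψ(Z - θ)| > 0` off the atom `{θ}`, which has mass `< 1`. -/

lemma HasDerivWithinAt.nonpos_of_forall_lt_le {f : ℝ → ℝ} {f' x : ℝ}
    (hf : HasDerivWithinAt f f' (Iio x) x) (hle : ∀ y < x, f x ≤ f y) : f' ≤ 0 := by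
  refine le_of_tendsto ((hasDerivWithinAt_iff_tendsto_slope' self_notMem_Iio).1 hf) ?_
  filter_upwards [self_mem_nhdsWithin] with y (hy : y < x)
  rw [slope_def_field]
  exact div_nonpos_of_nonneg_of_nonpos (sub_nonneg.2 (hle y hy)) (sub_nonpos.2 hy.le)

namespace ConvexOn

variable {f d : ℝ → ℝ}

lemma le_slope_of_hasDerivWithinAt_Iio {S : Set ℝ} {f' x y : ℝ} (hfc : ConvexOn ℝ S f)
    (hx : x ∈ interior S) (hy : y ∈ S) (hxy : x < y) (hf' : HasDerivWithinAt f f' (Iio x) x) :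
    f' ≤ slope f x y := by
  rw [← hf'.derivWithin (uniqueDiffWithinAt_Iio x)]
  exact (hfc.leftDeriv_le_rightDeriv_of_mem_interior hx).trans
    (hfc.rightDeriv_le_slope_of_mem_interior hx hy hxy)

lemma monotoneOn_Ici_of_isMinOn {a : ℝ} (hf : ConvexOn ℝ univ f) (hmin : IsMinOn f univ a) :
    MonotoneOn f (Ici a) := by
  intro x (hx : a ≤ x) y _ hxy
  rcases hx.eq_or_lt with rfl | hax
  · exact isMinOn_univ_iff.1 hmin y
  · exact hf.le_right_of_left_le'' trivial trivial hax hxy (isMinOn_univ_iff.1 hmin x)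

lemma antitoneOn_Iic_of_isMinOn {a : ℝ} (hf : ConvexOn ℝ univ f) (hmin : IsMinOn f univ a) :
    AntitoneOn f (Iic a) := by
  intro x _ y (hy : y ≤ a) hxy
  rcases hy.eq_or_lt with rfl | hya
  · exact isMinOn_univ_iff.1 hmin x
  · exact hf.le_left_of_right_le'' trivial trivial hxy hya (isMinOn_univ_iff.1 hmin y)

lemma le_slope_of_isLeftDeriv (hf : ConvexOn ℝ univ f) (hd : IsLeftDeriv f d) {x y : ℝ}
    (hxy : x < y) : d x ≤ slope f x y :=
  hf.le_slope_of_hasDerivWithinAt_Iio (by simp) trivial hxy (hd x)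

lemma slope_le_of_isLeftDeriv (hf : ConvexOn ℝ univ f) (hd : IsLeftDeriv f d) {x y : ℝ}
    (hxy : x < y) : slope f x y ≤ d y :=
  hf.slope_le_of_hasDerivWithinAt_Iio trivial trivial hxy (hd y)

lemma monotone_of_isLeftDeriv (hf : ConvexOn ℝ univ f) (hd : IsLeftDeriv f d) : Monotone d :=
  fun _ _ hxy => hxy.eq_or_lt.elim (fun h => h ▸ le_rfl) fun h =>
    (hf.le_slope_of_isLeftDeriv hd h).trans (hf.slope_le_of_isLeftDeriv hd h)

lemma abs_slope_le_of_isLeftDeriv (hf : ConvexOn ℝ univ f) (hd : IsLeftDeriv f d) (x y : ℝ) :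
    |slope f x y| ≤ |d x| + |d y| := by
  wlog hxy : x < y generalizing x y
  · rcases (not_lt.1 hxy).eq_or_lt with rfl | hyx
    · simp
    · rw [slope_comm, add_comm]
      exact this y x hyx
  have h₁ := hf.le_slope_of_isLeftDeriv hd hxy
  have h₂ := hf.slope_le_of_isLeftDeriv hd hxy
  exact abs_le.2 ⟨by linarith [neg_abs_le (d x), abs_nonneg (d y)],
    by linarith [le_abs_self (d y), abs_nonneg (d x)]⟩

variable {P : Measure ℝ}

lemma integrable_comp_sub_sub_comp_sub (hf : ConvexOn ℝ univ f) (hd : IsLeftDeriv f d)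
    (hint : ∀ θ, Integrable (fun z => d (z - θ)) P) (a b : ℝ) :
    Integrable (fun z => f (z - a) - f (z - b)) P := by
  have hcont : Continuous f := continuousOn_univ.1 (hf.continuousOn isOpen_univ)
  have hbound : Integrable (fun z => |b - a| * (|d (z - b)| + |d (z - a)|)) P :=
    ((hint b).abs.add (hint a).abs).const_mul _
  refine hbound.mono'
    (by fun_prop : Continuous fun z => f (z - a) - f (z - b)).aestronglyMeasurable
    (ae_of_all _ fun z => ?_)
  rw [Real.norm_eq_abs, ← vsub_eq_sub, ← sub_smul_slope f (z - b) (z - a), smul_eq_mul, abs_mul,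
    show z - a - (z - b) = b - a by ring]
  exact mul_le_mul_of_nonneg_left (hf.abs_slope_le_of_isLeftDeriv hd _ _) (abs_nonneg _)

theorem hasDerivWithinAt_integral_comp_sub (hf : ConvexOn ℝ univ f) (hd : IsLeftDeriv f d)
    (hint : ∀ θ, Integrable (fun z => d (z - θ)) P) (θ : ℝ) :
    HasDerivWithinAt (fun θ => ∫ z, (f (z - θ) - f z) ∂P) (-∫ z, d (z - θ) ∂P) (Ioi θ) θ := by
  have hcont : Continuous f := continuousOn_univ.1 (hf.continuousOn isOpen_univ)
  have hmono := hf.monotone_of_isLeftDeriv hd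
  have hderiv (z : ℝ) : HasDerivWithinAt (fun θ => f (z - θ)) (-d (z - θ)) (Ioi θ) θ := by
    have := (hd (z - θ)).comp θ ((hasDerivWithinAt_id θ (Ioi θ)).const_sub z)
      fun _ h => sub_lt_sub_left h z
    simpa [Function.comp_def] using this
  have hslope (θ' : ℝ) : slope (fun θ => ∫ z, (f (z - θ) - f z) ∂P) θ θ' =
      ∫ z, slope (fun θ => f (z - θ)) θ θ' ∂P := by
    have hint' (a : ℝ) : Integrable (fun z => f (z - a) - f z) P := by
      simpa using hf.integrable_comp_sub_sub_comp_sub hd hint a 0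
    simp only [slope_def_field, integral_div, ← integral_sub (hint' θ') (hint' θ),
      sub_sub_sub_cancel_right]
  rw [hasDerivWithinAt_iff_tendsto_slope' self_notMem_Ioi, ← integral_neg]
  refine Tendsto.congr (fun θ' => (hslope θ').symm) ?_
  refine tendsto_integral_filter_of_dominated_convergence
    (fun z => |d (z - (θ + 1))| + |d (z - θ)|) ?_ ?_ ((hint _).abs.add (hint θ).abs)
    (ae_of_all _ fun z => (hasDerivWithinAt_iff_tendsto_slope' self_notMem_Ioi).1 (hderiv z))
  · refine Eventually.of_forall fun θ' => Continuous.aestronglyMeasurable ?_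
    simp only [slope_def_field]
    fun_prop
  · filter_upwards [Ioo_mem_nhdsGT (lt_add_one θ)] with θ' ⟨hθ', hθ'1⟩
    refine ae_of_all _ fun z => ?_
    have hlt : z - θ' < z - θ := by linarith
    have h₁ := hf.le_slope_of_isLeftDeriv hd hlt
    have h₂ := hf.slope_le_of_isLeftDeriv hd hlt
    have h₃ := hmono (by linarith : z - (θ + 1) ≤ z - θ')
    have heq : slope (fun θ => f (z - θ)) θ θ' = -slope f (z - θ') (z - θ) := by
      simp only [slope_def_field]
      rw [← neg_div, show z - θ - (z - θ') = θ' - θ by ring]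
      ring_nf
    rw [Real.norm_eq_abs, heq, abs_le]
    constructor <;> linarith [le_abs_self (d (z - θ)), neg_abs_le (d (z - (θ + 1))),
      abs_nonneg (d (z - θ)), abs_nonneg (d (z - (θ + 1)))]

end ConvexOn

lemma rhoA_eq_piecewise {ρ : ℝ → ℝ} (hρ0 : ρ 0 = 0) (α : ℝ) :
    rhoA ρ α = (Iic 0).piecewise (fun t => (1 - α) * ρ t) (fun t => α * ρ t) := by
  funext t
  rcases lt_trichotomy t 0 with ht | rfl | ht
  · simp [rhoA, ht, ht.le, not_lt.2 ht.le]
  · simp [rhoA, hρ0]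
  · simp [rhoA, ht, not_le.2 ht, not_lt.2 ht.le]

def psiA (ψ : ℝ → ℝ) (α t : ℝ) : ℝ := (if t ≤ 0 then 1 - α else α) * ψ t

lemma isLeftDeriv_rhoA {ρ ψ : ℝ → ℝ} (hρ0 : ρ 0 = 0) (hψ : IsLeftDeriv ρ ψ) (α : ℝ) :
    IsLeftDeriv (rhoA ρ α) (psiA ψ α) := by
  intro t
  rw [rhoA_eq_piecewise hρ0]
  rcases le_or_gt t 0 with ht | ht
  · rw [psiA, if_pos ht]
    exact ((hψ t).const_mul _).congr (fun s hs => piecewise_eq_of_mem _ _ _ (hs.le.trans ht))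
      (piecewise_eq_of_mem _ _ _ ht)
  · rw [psiA, if_neg (not_le.2 ht)]
    refine ((hψ t).const_mul _).congr_of_eventuallyEq ?_
      (piecewise_eq_of_notMem _ _ _ (not_le.2 ht))
    filter_upwards [nhdsWithin_le_nhds (Ioi_mem_nhds ht)] with s (hs : 0 < s)
    exact piecewise_eq_of_notMem _ _ _ (not_le.2 hs)

lemma abs_psiA_le {ψ : ℝ → ℝ} {α : ℝ} (hα : α ∈ Icc (0 : ℝ) 1) (t : ℝ) :
    |psiA ψ α t| ≤ |ψ t| := by
  rw [psiA, abs_mul]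
  refine mul_le_of_le_one_left (abs_nonneg _) ?_
  split_ifs <;> rw [abs_le] <;> constructor <;> linarith [hα.1, hα.2]

namespace LossClass

variable {ρ ψ : ℝ → ℝ}

lemma map_zero (hρ : LossClass ρ) : ρ 0 = 0 := (hρ.2.2.2 0).2 rfl

lemma pos_of_ne_zero (hρ : LossClass ρ) {t : ℝ} (ht : t ≠ 0) : 0 < ρ t :=
  (hρ.2.1 t).lt_of_ne fun h => ht ((hρ.2.2.2 t).1 h.symm)

lemma isMinOn_zero (hρ : LossClass ρ) : IsMinOn ρ univ 0 :=
  isMinOn_univ_iff.2 fun t => by simpa [hρ.map_zero] using hρ.2.1 t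

lemma convexOn_rhoA (hρ : LossClass ρ) {α : ℝ} (hα : α ∈ Icc (0 : ℝ) 1) :
    ConvexOn ℝ univ (rhoA ρ α) := by
  have hmono := hρ.1.monotoneOn_Ici_of_isMinOn hρ.isMinOn_zero
  have hanti := hρ.1.antitoneOn_Iic_of_isMinOn hρ.isMinOn_zero
  rw [rhoA_eq_piecewise hρ.map_zero]
  refine convexOn_univ_piecewise_Iic_of_antitoneOn_Iic_monotoneOn_Ici
    ((hρ.1.subset (subset_univ _) (convex_Iic 0)).smul (sub_nonneg.2 hα.2))
    ((hρ.1.subset (subset_univ _) (convex_Ici 0)).smul hα.1)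
    (fun x hx y hy hxy => mul_le_mul_of_nonneg_left (hanti hx hy hxy) (sub_nonneg.2 hα.2))
    (fun x hx y hy hxy => mul_le_mul_of_nonneg_left (hmono hx hy hxy) hα.1) ?_
  simp [hρ.map_zero]

lemma leftDeriv_pos (hρ : LossClass ρ) (hψ : IsLeftDeriv ρ ψ) {t : ℝ} (ht : 0 < t) :
    0 < ψ t := by
  have h := hρ.1.slope_le_of_isLeftDeriv hψ ht
  rw [slope_def_field, hρ.map_zero, sub_zero, sub_zero] at h
  exact (div_pos (hρ.pos_of_ne_zero ht.ne') ht).trans_le h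

lemma leftDeriv_neg (hρ : LossClass ρ) (hψ : IsLeftDeriv ρ ψ) {t : ℝ} (ht : t < 0) :
    ψ t < 0 := by
  have h := hρ.1.le_slope_of_isLeftDeriv hψ ht
  rw [slope_def_field, hρ.map_zero, zero_sub, zero_sub, neg_div_neg_eq] at h
  exact h.trans_lt (div_neg_of_pos_of_neg (hρ.pos_of_ne_zero ht.ne) ht)

lemma leftDeriv_nonpos (hρ : LossClass ρ) (hψ : IsLeftDeriv ρ ψ) {t : ℝ} (ht : t ≤ 0) :
    ψ t ≤ 0 :=
  (hψ t).nonpos_of_forall_lt_le fun _ hs =>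
    hρ.1.antitoneOn_Iic_of_isMinOn hρ.isMinOn_zero (hs.le.trans ht) ht hs.le

lemma neg_psiA_eq (hρ : LossClass ρ) (hψ : IsLeftDeriv ρ ψ) (α t : ℝ) :
    -psiA ψ α t = |ψ t| * (if t ≤ 0 then 1 else 0) - α * |ψ t| := by
  rw [psiA]
  split_ifs with ht
  · rw [abs_of_nonpos (hρ.leftDeriv_nonpos hψ ht)]; ring
  · rw [abs_of_pos (hρ.leftDeriv_pos hψ (not_le.1 ht))]; ring

lemma integral_abs_leftDeriv_comp_sub_pos (hρ : LossClass ρ) (hψ : IsLeftDeriv ρ ψ)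
    {P : Measure ℝ} [IsProbabilityMeasure P] {θ : ℝ} (hPθ : P {θ} < 1)
    (hint : Integrable (fun z => |ψ (z - θ)|) P) : 0 < ∫ z, |ψ (z - θ)| ∂P := by
  rw [integral_pos_iff_support_of_nonneg (fun z => abs_nonneg _) hint]
  have hsupp : ({θ}ᶜ : Set ℝ) ⊆ Function.support fun z => |ψ (z - θ)| := by
    intro z (hz : z ≠ θ)
    rcases hz.lt_or_gt with h | h
    · exact (abs_pos.2 (hρ.leftDeriv_neg hψ (sub_neg.2 h)).ne).ne'
    · exact (abs_pos.2 (hρ.leftDeriv_pos hψ (sub_pos.2 h)).ne').ne'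
  refine lt_of_lt_of_le ?_ (measure_mono hsupp)
  rw [prob_compl_eq_one_sub (measurableSet_singleton θ)]
  exact tsub_pos_iff_lt.2 hPθ

end LossClass

theorem hasDerivWithinAt_obj {α : ℝ} (hα : α ∈ Icc (0 : ℝ) 1) {ρ ψ : ℝ → ℝ} (hρ : LossClass ρ)
    (hψ : IsLeftDeriv ρ ψ) {P : Measure ℝ} (hint : ∀ θ, Integrable (fun z => |ψ (z - θ)|) P)
    (θ : ℝ) :
    HasDerivWithinAt (Obj ρ α P)
      ((∫ z, |ψ (z - θ)| * (if z ≤ θ then 1 else 0) ∂P) - α * ∫ z, |ψ (z - θ)| ∂P) (Ioi θ) θ := by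
  have hd := isLeftDeriv_rhoA hρ.map_zero hψ α
  have hf := hρ.convexOn_rhoA hα
  have hintA (θ : ℝ) : Integrable (fun z => psiA ψ α (z - θ)) P :=
    (hint θ).mono' ((hf.monotone_of_isLeftDeriv hd).measurable.comp
      (measurable_sub_const θ)).aestronglyMeasurable (ae_of_all _ fun z => abs_psiA_le hα _)
  have hintLe : Integrable (fun z => |ψ (z - θ)| * (if z ≤ θ then 1 else 0)) P := by
    refine ((hint θ).indicator (measurableSet_Iic (a := θ))).congr (ae_of_all _ fun z => ?_)
    by_cases hz : z ≤ θ <;> simp [hz]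
  refine (hf.hasDerivWithinAt_integral_comp_sub hd hintA θ).congr_deriv ?_
  rw [← integral_neg, ← integral_const_mul, ← integral_sub hintLe ((hint θ).const_mul α)]
  refine integral_congr_ae (ae_of_all _ fun z => ?_)
  simp only [hρ.neg_psiA_eq hψ, sub_nonpos]

theorem stmt_1 (α : ℝ) (hα : α ∈ Set.Ioo (0 : ℝ) 1)
    (ρ ψ : ℝ → ℝ) (hρ : LossClass ρ) (hψ : IsLeftDeriv ρ ψ)
    (P : Measure ℝ) [IsProbabilityMeasure P]
    (hP1 : ∀ θ : ℝ, P {θ} < 1)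
    (hP2 : ∀ θ : ℝ, Integrable (fun z => |ψ (z - θ)|) P) :
    (∀ θ : ℝ, 0 < ∫ z, |ψ (z - θ)| ∂P) ∧
    (∀ θ D : ℝ, HasDerivWithinAt (Obj ρ α P) D (Set.Ioi θ) θ →
      ((0 < D ↔ α < Gfun ψ P θ) ∧ (D = 0 ↔ Gfun ψ P θ = α) ∧
        (D < 0 ↔ Gfun ψ P θ < α))) := by
  have hS (θ : ℝ) : 0 < ∫ z, |ψ (z - θ)| ∂P :=
    hρ.integral_abs_leftDeriv_comp_sub_pos hψ (hP1 θ) (hP2 θ)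
  refine ⟨hS, fun θ D hD => ?_⟩
  rw [(uniqueDiffWithinAt_Ioi θ).eq_deriv _ hD
      (hasDerivWithinAt_obj (Ioo_subset_Icc_self hα) hρ hψ hP2 θ),
    Gfun, lt_div_iff₀ (hS θ), div_eq_iff (hS θ).ne', div_lt_iff₀ (hS θ), sub_pos, sub_eq_zero,
    sub_neg]
  exact ⟨Iff.rfl, Iff.rfl, Iff.rfl⟩
end
end

section
/- Let P ∈ 𝒫_d, let Z be a random d-vector with law P, and let μ_P = E[Z]. Then the expectile depth ED(z,P) is uniquely maximized at z = μ_P, and the maximal value is ED(μ_P,P) = 1/2; that is, ED(μ_P,P) = 1/2 and ED(z,P) < 1/2 for every z ≠ μ_P. -/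
open MeasureTheory Set Filter
open scoped RealInnerProductSpace ENNReal

noncomputable section

/-- The directional expectile outlyingness
`e_z(u) = E[|u'(Z−z)|·𝟙[u'(Z−z) ≤ 0]] / E[|u'(Z−z)|]` for `Z ~ P`. -/
def eOut {E : Type*} [NormedAddCommGroup E] [InnerProductSpace ℝ E] [MeasurableSpace E]
    (P : Measure E) (z u : E) : ℝ :=
  (∫ y, |⟪u, y - z⟫| * (if ⟪u, y - z⟫ ≤ 0 then 1 else 0) ∂P) / ∫ y, |⟪u, y - z⟫| ∂P

/-- The halfspace expectile depth `ED(z,P) = inf_{u ∈ S^{d−1}} e_z(u)`. -/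
def EDepth {E : Type*} [NormedAddCommGroup E] [InnerProductSpace ℝ E] [MeasurableSpace E]
    (P : Measure E) (z : E) : ℝ :=
  ⨅ u : {u : E // ‖u‖ = 1}, eOut P z u.1

/-- The C-support `C_P = {z : P[{y : u'y ≤ u'z}] > 0 for every unit u}`. -/
def Csupport {E : Type*} [NormedAddCommGroup E] [InnerProductSpace ℝ E] [MeasurableSpace E]
    (P : Measure E) : Set E :=
  {z | ∀ u : E, ‖u‖ = 1 → 0 < P {y | ⟪u, y⟫ ≤ ⟪u, z⟫}}

/-! Since `|t| · 𝟙[t ≤ 0] = (|t| - t) / 2` and `E⟪u, Z - z⟫ = ⟪u, μ - z⟫`, the directional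
outlyingness is `1/2 - ⟪u, μ - z⟫ / (2 E|⟪u, Z - z⟫|)`, whose denominator is positive because
no hyperplane carries all of `P`. At `z = μ` every direction gives `1/2`; for `z ≠ μ` the
direction of `μ - z` gives strictly less. -/

lemma abs_mul_ite_nonpos (a : ℝ) : |a| * (if a ≤ 0 then 1 else 0) = (|a| - a) / 2 := by
  split_ifs with h
  · rw [abs_of_nonpos h]; ring
  · rw [abs_of_pos (not_le.1 h)]; ring

section

variable {E : Type*} [NormedAddCommGroup E] [InnerProductSpace ℝ E] [MeasurableSpace E]
  (P : Measure E)

lemma eOut_nonneg (z u : E) : 0 ≤ eOut P z u :=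
  div_nonneg (integral_nonneg fun _ => mul_nonneg (abs_nonneg _) (by split_ifs <;> norm_num))
    (integral_nonneg fun _ => abs_nonneg _)

lemma EDepth_le_eOut (z : E) {u : E} (hu : ‖u‖ = 1) : EDepth P z ≤ eOut P z u :=
  ciInf_le ⟨0, by rintro _ ⟨v, rfl⟩; exact eOut_nonneg P z v.1⟩ (⟨u, hu⟩ : {u : E // ‖u‖ = 1})

variable [IsProbabilityMeasure P]

lemma integrable_inner_sub (hmom : Integrable (fun y : E => y) P) (z u : E) :
    Integrable (fun y => ⟪u, y - z⟫) P :=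
  (hmom.sub (integrable_const z)).const_inner u

lemma integral_abs_inner_sub_pos [OpensMeasurableSpace E] (hmom : Integrable (fun y : E => y) P)
    (z u : E) (hu : P {y | ⟪u, y⟫ = ⟪u, z⟫} < 1) : 0 < ∫ y, |⟪u, y - z⟫| ∂P := by
  refine lt_of_le_of_ne (integral_nonneg fun _ => abs_nonneg _) fun h => hu.ne ?_
  have hae := (integral_eq_zero_iff_of_nonneg (fun _ => abs_nonneg _)
    (integrable_inner_sub P hmom z u).abs).1 h.symm
  have hmeas : MeasurableSet {y : E | ⟪u, y⟫ = ⟪u, z⟫} :=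
    (isClosed_eq (continuous_const.inner continuous_id) continuous_const).measurableSet
  rw [← mem_ae_iff_prob_eq_one hmeas]
  filter_upwards [hae] with y hy
  rwa [Pi.zero_apply, abs_eq_zero, inner_sub_right, sub_eq_zero] at hy

variable [CompleteSpace E]

lemma eOut_eq (hmom : Integrable (fun y : E => y) P) (z u : E) :
    eOut P z u = (∫ y, |⟪u, y - z⟫| ∂P - ⟪u, (∫ y, y ∂P) - z⟫) / (2 * ∫ y, |⟪u, y - z⟫| ∂P) := by
  have hf := integrable_inner_sub P hmom z u
  have hmean : ∫ y, ⟪u, y - z⟫ ∂P = ⟪u, (∫ y, y ∂P) - z⟫ := by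
    rw [integral_inner (f := fun y => y - z) (hmom.sub (integrable_const z)),
      integral_sub hmom (integrable_const z), integral_const, probReal_univ, one_smul]
  simp only [eOut, abs_mul_ite_nonpos]
  rw [integral_div, integral_sub hf.abs hf, hmean, div_div, mul_comm]

variable [OpensMeasurableSpace E]

lemma eOut_integral_eq_half (hmom : Integrable (fun y : E => y) P) (u : E)
    (hu : P {y | ⟪u, y⟫ = ⟪u, ∫ y, y ∂P⟫} < 1) : eOut P (∫ y, y ∂P) u = 1 / 2 := by
  have hpos := integral_abs_inner_sub_pos P hmom _ u hu
  rw [eOut_eq P hmom, sub_self, inner_zero_right, sub_zero]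
  field_simp

lemma eOut_lt_half (hmom : Integrable (fun y : E => y) P) (z u : E)
    (hu : P {y | ⟪u, y⟫ = ⟪u, z⟫} < 1) (hmean : 0 < ⟪u, (∫ y, y ∂P) - z⟫) :
    eOut P z u < 1 / 2 := by
  have hpos := integral_abs_inner_sub_pos P hmom z u hu
  rw [eOut_eq P hmom, div_lt_iff₀ (by positivity)]
  linarith

lemma EDepth_integral_eq_half [Nontrivial E] (hmom : Integrable (fun y : E => y) P)
    (hP : ∀ u : E, ‖u‖ = 1 → ∀ c : ℝ, P {y | ⟪u, y⟫ = c} < 1) :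
    EDepth P (∫ y, y ∂P) = 1 / 2 := by
  obtain ⟨u, hu⟩ := exists_norm_eq E zero_le_one
  have : Nonempty {u : E // ‖u‖ = 1} := ⟨⟨u, hu⟩⟩
  rw [EDepth, iInf_congr fun v : {u : E // ‖u‖ = 1} =>
    eOut_integral_eq_half P hmom v.1 (hP v.1 v.2 _), ciInf_const]

lemma EDepth_lt_half (hmom : Integrable (fun y : E => y) P)
    (hP : ∀ u : E, ‖u‖ = 1 → ∀ c : ℝ, P {y | ⟪u, y⟫ = c} < 1)
    {z : E} (hz : z ≠ ∫ y, y ∂P) : EDepth P z < 1 / 2 := by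
  set v := (∫ y, y ∂P) - z
  have hv : v ≠ 0 := sub_ne_zero.2 hz.symm
  have hu : ‖‖v‖⁻¹ • v‖ = 1 := norm_smul_inv_norm hv
  have hmean : 0 < ⟪‖v‖⁻¹ • v, v⟫ := by
    rw [real_inner_smul_left, real_inner_self_eq_norm_sq]
    have := norm_pos_iff.2 hv
    positivity
  exact (EDepth_le_eOut P z hu).trans_lt (eOut_lt_half P hmom z _ (hP _ hu _) hmean)

end

theorem stmt_14 {d : ℕ} (hd : 0 < d)
    (P : Measure (EuclideanSpace ℝ (Fin d))) [IsProbabilityMeasure P]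
    (hmom : Integrable (fun y : EuclideanSpace ℝ (Fin d) => y) P)
    (hP1 : ∀ u : EuclideanSpace ℝ (Fin d), ‖u‖ = 1 → ∀ c : ℝ, P {z | ⟪u, z⟫ = c} < 1) :
    EDepth P (∫ y, y ∂P) = 1 / 2 ∧
    ∀ z : EuclideanSpace ℝ (Fin d), z ≠ ∫ y, y ∂P → EDepth P z < 1 / 2 := by
  have : Nonempty (Fin d) := ⟨⟨0, hd⟩⟩
  exact ⟨EDepth_integral_eq_half P hmom hP1, fun _ => EDepth_lt_half P hmom hP1⟩
end
end

section
/- Fix P ∈ 𝒫_d with mean vector μ_P and fix u ∈ S^{d−1}. Let r_u(P) = sup{r > 0 : μ_P + r·u ∈ C_P} ∈ (0, +∞]. Then the map r ↦ ED(μ_P + r·u, P) is monotone strictly decreasing on [0, r_u(P)] (on [0,∞) if r_u(P) = +∞), and ED(μ_P + r·u, P) = 0 for every r ≥ r_u(P). -/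
open MeasureTheory Set Filter
open scoped RealInnerProductSpace ENNReal

noncomputable section

/-! Write `μ` for the mean and `L_z(w) = E[(w'(Z - z))⁻]`. Since
`E|w'(Z - z)| = 2 L_z(w) + w'(μ - z)`, the outlyingness in direction `w` is
`L_z(w) / (2 L_z(w) + w'(μ - z))`; it is at least `1/2` when `w'(z - μ) ≥ 0` and below `1/2`
otherwise. On the ray `z_t = μ + t u`, for a direction with `w'u < 0`, the pointwise inequality
`r (x - s a)⁻ ≤ s (x - r a)⁻` (strict where `x < r a`) gives `r L_{z_s}(w) < s L_{z_r}(w)`, hence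
a strictly smaller outlyingness at `z_s`, provided the open halfspace `{w'y < w'z_r}` has positive
mass. Call `z` strict if this holds in every direction. Points `z_r` with `r < r_u` are strict,
and by compactness of the sphere a neighbourhood of a strict point lies in `C_P`, so `z_r` is not
strict for `r ≥ r_u`: some `L_{z_r}(w)` vanishes and so does the depth. -/

open Topology

namespace ExpectileDepth

lemma mul_negPart_sub_mul_le {x a r s : ℝ} (ha : a ≤ 0) (hr : 0 ≤ r) (hrs : r ≤ s) :
    r * (x - s * a)⁻ ≤ s * (x - r * a)⁻ := by
  have hsa : s * a ≤ r * a := mul_le_mul_of_nonpos_right hrs ha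
  rcases le_total (x - r * a) 0 with h | h
  · have hx : x ≤ 0 := by linarith [mul_nonpos_of_nonneg_of_nonpos hr ha]
    rw [negPart_eq_neg.2 h]
    rcases le_total (x - s * a) 0 with h' | h'
    · rw [negPart_eq_neg.2 h']
      linarith [mul_le_mul_of_nonpos_right hrs hx]
    · rw [negPart_eq_zero.2 h', mul_zero]
      exact mul_nonneg (hr.trans hrs) (by linarith)
  · rw [negPart_eq_zero.2 h, negPart_eq_zero.2 (by linarith), mul_zero, mul_zero]

lemma mul_negPart_sub_mul_lt {x a r s : ℝ} (ha : a ≤ 0) (hr : 0 ≤ r) (hrs : r < s)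
    (h : x - r * a < 0) : r * (x - s * a)⁻ < s * (x - r * a)⁻ := by
  have hx : x < 0 := by linarith [mul_nonpos_of_nonneg_of_nonpos hr ha]
  rw [negPart_eq_neg.2 h.le]
  rcases le_total (x - s * a) 0 with h' | h'
  · rw [negPart_eq_neg.2 h']
    linarith [mul_lt_mul_of_neg_right hrs hx]
  · rw [negPart_eq_zero.2 h', mul_zero]
    exact mul_pos (hr.trans_lt hrs) (by linarith)

variable {E : Type*} [NormedAddCommGroup E] [InnerProductSpace ℝ E]

lemma inner_sub_add_smul (w y x u : E) (t : ℝ) :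
    ⟪w, y - (x + t • u)⟫ = ⟪w, y - x⟫ - t * ⟪w, u⟫ := by
  rw [sub_add_eq_sub_sub, inner_sub_right, real_inner_smul_right]

lemma inner_sub_add_smul_self (w x u : E) (t : ℝ) :
    ⟪w, x - (x + t • u)⟫ = -(t * ⟪w, u⟫) := by
  rw [inner_sub_add_smul, sub_self, inner_zero_right, zero_sub]

variable [MeasurableSpace E] {P : Measure E}

def lowerPartialMoment (P : Measure E) (z w : E) : ℝ := ∫ y, (⟪w, y - z⟫)⁻ ∂P

def NotConcentratedOnHyperplane (P : Measure E) : Prop :=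
  ∀ v : E, ‖v‖ = 1 → ∀ c : ℝ, P {y | ⟪v, y⟫ = c} < 1

def strictCsupport (P : Measure E) : Set E :=
  {z | ∀ v : E, ‖v‖ = 1 → 0 < P {y | ⟪v, y⟫ < ⟪v, z⟫}}

def rayRadius (P : Measure E) (x u : E) : ℝ≥0∞ :=
  ⨆ (s : ℝ) (_ : 0 < s ∧ x + s • u ∈ Csupport P), ENNReal.ofReal s

lemma ofReal_le_rayRadius {x u : E} {s : ℝ} (hs : 0 < s) (hmem : x + s • u ∈ Csupport P) :
    ENNReal.ofReal s ≤ rayRadius P x u :=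
  le_iSup₂_of_le s ⟨hs, hmem⟩ le_rfl

lemma exists_lt_mem_Csupport_of_ofReal_lt_rayRadius {x u : E} {r : ℝ}
    (h : ENNReal.ofReal r < rayRadius P x u) : ∃ s, r < s ∧ x + s • u ∈ Csupport P := by
  simp only [rayRadius, lt_iSup_iff] at h
  obtain ⟨s, ⟨hs, hmem⟩, hrs⟩ := h
  exact ⟨s, (ENNReal.ofReal_lt_ofReal_iff hs).1 hrs, hmem⟩

lemma abs_mul_ite_nonpos_eq_negPart (c : ℝ) : |c| * (if c ≤ 0 then 1 else 0) = c⁻ := by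
  rcases le_or_gt c 0 with h | h
  · simp [h, abs_of_nonpos h]
  · simp [h.not_ge, negPart_eq_zero.2 h.le]

lemma eOut_eq_div (z w : E) :
    eOut P z w = lowerPartialMoment P z w / ∫ y, |⟪w, y - z⟫| ∂P := by
  simp only [eOut, lowerPartialMoment, abs_mul_ite_nonpos_eq_negPart]

lemma eOut_nonneg (z w : E) : 0 ≤ eOut P z w := by
  rw [eOut_eq_div]
  exact div_nonneg (integral_nonneg fun _ => negPart_nonneg _)
    (integral_nonneg fun _ => abs_nonneg _)

lemma EDepth_nonneg (z : E) : 0 ≤ EDepth P z :=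
  Real.iInf_nonneg fun w => eOut_nonneg z w.1

lemma EDepth_le_eOut (z : E) {w : E} (hw : ‖w‖ = 1) : EDepth P z ≤ eOut P z w := by
  unfold EDepth
  exact ciInf_le ⟨0, Set.forall_mem_range.2 fun v : {v : E // ‖v‖ = 1} => eOut_nonneg z v.1⟩
    ⟨w, hw⟩

lemma EDepth_eq_zero_of_lowerPartialMoment_eq_zero {z w : E} (hw : ‖w‖ = 1)
    (h : lowerPartialMoment P z w = 0) : EDepth P z = 0 :=
  le_antisymm ((EDepth_le_eOut z hw).trans_eq (by rw [eOut_eq_div, h, zero_div]))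
    (EDepth_nonneg z)

lemma lowerPartialMoment_eq_zero_of_measure_eq_zero {z w : E}
    (h : P {y | ⟪w, y⟫ < ⟪w, z⟫} = 0) : lowerPartialMoment P z w = 0 := by
  refine integral_eq_zero_of_ae ?_
  filter_upwards [measure_eq_zero_iff_ae_notMem.1 h] with y hy
  simp only [not_lt] at hy
  exact negPart_eq_zero.2 (by rw [inner_sub_right]; linarith)

lemma EDepth_eq_zero_of_notMem_strictCsupport {z : E} (hz : z ∉ strictCsupport P) :
    EDepth P z = 0 := by
  simp only [strictCsupport, Set.mem_ofPred_eq, not_forall, not_lt, nonpos_iff_eq_zero] at hz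
  obtain ⟨w, hw, h⟩ := hz
  exact EDepth_eq_zero_of_lowerPartialMoment_eq_zero hw
    (lowerPartialMoment_eq_zero_of_measure_eq_zero h)

section Integrable

variable [IsFiniteMeasure P]

lemma integrable_inner_sub (hP : Integrable (fun y : E => y) P) (z w : E) :
    Integrable (fun y => ⟪w, y - z⟫) P :=
  (innerSL ℝ w).integrable_comp (hP.sub (integrable_const z))

lemma integrable_negPart_inner_sub (hP : Integrable (fun y : E => y) P) (z w : E) :
    Integrable (fun y => (⟪w, y - z⟫)⁻) P :=
  (integrable_inner_sub hP z w).neg_part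

lemma mul_lowerPartialMoment_lt (hP : Integrable (fun y : E => y) P) {x u w : E} {r s : ℝ}
    (hwu : ⟪w, u⟫ ≤ 0) (hr : 0 ≤ r) (hrs : r < s)
    (hpos : 0 < P {y | ⟪w, y⟫ < ⟪w, x + r • u⟫}) :
    r * lowerPartialMoment P (x + s • u) w < s * lowerPartialMoment P (x + r • u) w := by
  have hint := ((integrable_negPart_inner_sub hP (x + r • u) w).const_mul s).sub
    ((integrable_negPart_inner_sub hP (x + s • u) w).const_mul r)
  have hgap : 0 < ∫ y, (s * (⟪w, y - (x + r • u)⟫)⁻ - r * (⟪w, y - (x + s • u)⟫)⁻) ∂P := by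
    refine (integral_pos_iff_support_of_nonneg (fun y => ?_) hint).2 (hpos.trans_le ?_)
    · simp only [Pi.zero_apply, Pi.sub_apply, sub_nonneg, inner_sub_add_smul]
      exact mul_negPart_sub_mul_le hwu hr hrs.le
    · refine measure_mono fun y hy => (sub_pos.2 ?_).ne'
      simp only [inner_sub_add_smul]
      refine mul_negPart_sub_mul_lt hwu hr hrs ?_
      rw [← inner_sub_add_smul, inner_sub_right]
      exact sub_neg.2 hy
  rw [integral_sub ((integrable_negPart_inner_sub hP _ w).const_mul s)
    ((integrable_negPart_inner_sub hP _ w).const_mul r), integral_const_mul,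
    integral_const_mul] at hgap
  rw [lowerPartialMoment, lowerPartialMoment]
  linarith

lemma continuousOn_integral_comp_inner_sub
    (hP : Integrable (fun y : E => y) P) (z : E) {g : ℝ → ℝ} (hg : Continuous g)
    (hg_le : ∀ x, |g x| ≤ |x|) :
    ContinuousOn (fun w => ∫ y, g ⟪w, y - z⟫ ∂P) (Metric.sphere 0 1) := by
  refine continuousOn_of_dominated
    (fun w _ => hg.comp_aestronglyMeasurable (integrable_inner_sub hP z w).aestronglyMeasurable)
    (fun w hw => Eventually.of_forall fun y => ?_) (hP.sub (integrable_const z)).norm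
    (Eventually.of_forall fun y => (hg.comp (continuous_id.inner continuous_const)).continuousOn)
  calc ‖g ⟪w, y - z⟫‖ ≤ |⟪w, y - z⟫| := hg_le _
    _ ≤ ‖w‖ * ‖y - z‖ := abs_real_inner_le_norm _ _
    _ = ‖y - z‖ := by rw [mem_sphere_zero_iff_norm.1 hw, one_mul]

end Integrable

section Probability

variable [IsProbabilityMeasure P]

lemma not_ae_inner_eq (hP₁ : NotConcentratedOnHyperplane P) {w : E} (hw : ‖w‖ = 1) (c : ℝ) :
    ¬ ∀ᵐ y ∂P, ⟪w, y⟫ = c := fun h =>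
  (hP₁ w hw c).ne <| by
    rw [measure_congr (ae_eq_univ.2 (ae_iff.1 h) : {y | ⟪w, y⟫ = c} =ᵐ[P] univ), measure_univ]

lemma integral_abs_inner_sub_pos (hP₁ : NotConcentratedOnHyperplane P)
    (hP : Integrable (fun y : E => y) P) {w : E} (hw : ‖w‖ = 1) (z : E) :
    0 < ∫ y, |⟪w, y - z⟫| ∂P := by
  refine (integral_nonneg fun _ => abs_nonneg _).lt_of_ne fun h =>
    not_ae_inner_eq hP₁ hw ⟪w, z⟫ ?_
  filter_upwards [(integral_eq_zero_iff_of_nonneg (fun _ => abs_nonneg _)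
    (integrable_inner_sub hP z w).abs).1 h.symm] with y hy
  rwa [Pi.zero_apply, abs_eq_zero, inner_sub_right, sub_eq_zero] at hy

variable [CompleteSpace E]

lemma integral_inner_sub (hP : Integrable (fun y : E => y) P) (z w : E) :
    ∫ y, ⟪w, y - z⟫ ∂P = ⟪w, (∫ y, y ∂P) - z⟫ := by
  rw [integral_inner (𝕜 := ℝ) (f := fun y => y - z) (hP.sub (integrable_const z)),
    integral_sub hP (integrable_const z),
    integral_const, probReal_univ, one_smul]

lemma integral_abs_inner_sub (hP : Integrable (fun y : E => y) P) (z w : E) :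
    ∫ y, |⟪w, y - z⟫| ∂P = 2 * lowerPartialMoment P z w + ⟪w, (∫ y, y ∂P) - z⟫ := by
  have habs (c : ℝ) : |c| = 2 * c⁻ + c := by
    linarith [posPart_add_negPart c, posPart_sub_negPart c]
  simp_rw [habs]
  rw [integral_add ((integrable_negPart_inner_sub hP z w).const_mul 2)
    (integrable_inner_sub hP z w), integral_const_mul, integral_inner_sub hP, lowerPartialMoment]

lemma eOut_eq (hP : Integrable (fun y : E => y) P) (z w : E) :
    eOut P z w = lowerPartialMoment P z w /
      (2 * lowerPartialMoment P z w + ⟪w, (∫ y, y ∂P) - z⟫) := by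
  rw [eOut_eq_div, integral_abs_inner_sub hP]

lemma measure_inner_lt_pos (hP₁ : NotConcentratedOnHyperplane P)
    (hP : Integrable (fun y : E => y) P) {w z : E} (hw : ‖w‖ = 1)
    (hz : ⟪w, (∫ y, y ∂P) - z⟫ ≤ 0) : 0 < P {y | ⟪w, y⟫ < ⟪w, z⟫} := by
  refine pos_iff_ne_zero.2 fun h => not_ae_inner_eq hP₁ hw ⟪w, z⟫ ?_
  have hge : 0 ≤ᵐ[P] fun y => ⟪w, y - z⟫ := by
    filter_upwards [measure_eq_zero_iff_ae_notMem.1 h] with y hy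
    simpa [inner_sub_right] using hy
  have hzero : ∫ y, ⟪w, y - z⟫ ∂P = 0 :=
    le_antisymm ((integral_inner_sub hP z w).trans_le hz) (integral_nonneg_of_ae hge)
  filter_upwards [(integral_eq_zero_iff_of_nonneg_ae hge (integrable_inner_sub hP z w)).1 hzero]
    with y hy
  rwa [Pi.zero_apply, inner_sub_right, sub_eq_zero] at hy

lemma integral_mem_strictCsupport (hP₁ : NotConcentratedOnHyperplane P)
    (hP : Integrable (fun y : E => y) P) : ∫ y, y ∂P ∈ strictCsupport P := fun _ hw =>
  measure_inner_lt_pos hP₁ hP hw (by rw [sub_self, inner_zero_right])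

lemma half_le_eOut (hP₁ : NotConcentratedOnHyperplane P)
    (hP : Integrable (fun y : E => y) P) {w z : E} (hw : ‖w‖ = 1)
    (hz : ⟪w, (∫ y, y ∂P) - z⟫ ≤ 0) : 1 / 2 ≤ eOut P z w := by
  have hD := integral_abs_inner_sub_pos hP₁ hP hw z
  rw [integral_abs_inner_sub hP] at hD
  rw [eOut_eq hP, le_div_iff₀ hD]
  linarith

lemma eOut_lt_half (hP : Integrable (fun y : E => y) P) {w z : E}
    (hz : 0 < ⟪w, (∫ y, y ∂P) - z⟫) : eOut P z w < 1 / 2 := by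
  have hL : 0 ≤ lowerPartialMoment P z w := integral_nonneg fun _ => negPart_nonneg _
  rw [eOut_eq hP, div_lt_iff₀ (by linarith)]
  linarith

lemma eOut_lt_eOut_of_inner_neg (hP : Integrable (fun y : E => y) P) {u w : E} {r s : ℝ}
    (hwu : ⟪w, u⟫ < 0) (hr : 0 ≤ r) (hrs : r < s)
    (hpos : 0 < P {y | ⟪w, y⟫ < ⟪w, (∫ y, y ∂P) + r • u⟫}) :
    eOut P ((∫ y, y ∂P) + s • u) w < eOut P ((∫ y, y ∂P) + r • u) w := by
  have hlt := mul_lowerPartialMoment_lt hP hwu.le hr hrs hpos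
  have hLs : 0 ≤ lowerPartialMoment P ((∫ y, y ∂P) + s • u) w :=
    integral_nonneg fun _ => negPart_nonneg _
  have hLr : 0 < lowerPartialMoment P ((∫ y, y ∂P) + r • u) w :=
    pos_of_mul_pos_right ((mul_nonneg hr hLs).trans_lt hlt) (hr.trans hrs.le)
  rw [eOut_eq hP, eOut_eq hP, inner_sub_add_smul_self, inner_sub_add_smul_self,
    div_lt_div_iff₀ (by nlinarith) (by nlinarith)]
  nlinarith

lemma mem_strictCsupport_of_mem_Csupport (hP₁ : NotConcentratedOnHyperplane P)
    (hP : Integrable (fun y : E => y) P) {u : E} {r s : ℝ} (hr : 0 ≤ r) (hrs : r < s)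
    (hs : (∫ y, y ∂P) + s • u ∈ Csupport P) : (∫ y, y ∂P) + r • u ∈ strictCsupport P := by
  intro w hw
  rcases le_or_gt 0 ⟪w, u⟫ with hwu | hwu
  · refine measure_inner_lt_pos hP₁ hP hw ?_
    rw [inner_sub_add_smul_self, neg_nonpos]
    exact mul_nonneg hr hwu
  · refine (hs w hw).trans_le (measure_mono fun y hy => ?_)
    simp only [Set.mem_ofPred_eq, inner_add_right, real_inner_smul_right] at hy ⊢
    linarith [mul_lt_mul_of_neg_right hrs hwu]

end Probability

section FiniteDimensional

variable [FiniteDimensional ℝ E]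

lemma eventually_mem_Csupport {z : E} (hz : z ∈ strictCsupport P) :
    ∀ᶠ x in 𝓝 z, x ∈ Csupport P := by
  by_contra h
  obtain ⟨x, hx, hxC⟩ := frequently_iff_seq_forall.1 (not_eventually.1 h)
  simp only [Csupport, Set.mem_ofPred_eq, not_forall, not_lt, nonpos_iff_eq_zero] at hxC
  choose v hv hnull using hxC
  obtain ⟨w, hw, φ, hφ, hvw⟩ :=
    (isCompact_sphere (0 : E) 1).tendsto_subseq fun n => mem_sphere_zero_iff_norm.2 (hv n)
  refine (hz w (mem_sphere_zero_iff_norm.1 hw)).ne' (measure_mono_null (fun y hy => ?_)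
    (measure_iUnion_null hnull))
  have hlim : Tendsto (fun n => ⟪v (φ n), x (φ n) - y⟫) atTop (𝓝 ⟪w, z - y⟫) :=
    hvw.inner ((hx.comp hφ.tendsto_atTop).sub_const y)
  have hwzy : 0 < ⟪w, z - y⟫ := by
    rw [inner_sub_right]
    exact sub_pos.2 hy
  obtain ⟨n, hn⟩ := (hlim.eventually (lt_mem_nhds hwzy)).exists
  rw [inner_sub_right, sub_pos] at hn
  exact Set.mem_iUnion.2 ⟨φ n, hn.le⟩

lemma exists_lt_mem_Csupport_of_mem_strictCsupport {x u : E} {r : ℝ}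
    (hr : x + r • u ∈ strictCsupport P) : ∃ t, r < t ∧ x + t • u ∈ Csupport P := by
  have hray : Tendsto (fun t : ℝ => x + t • u) (𝓝[>] r) (𝓝 (x + r • u)) :=
    ((continuous_const.add (continuous_id.smul continuous_const)).tendsto r).mono_left
      nhdsWithin_le_nhds
  exact ((eventually_mem_nhdsWithin (s := Ioi r)).and
    (hray.eventually (eventually_mem_Csupport hr))).exists

lemma ofReal_lt_rayRadius {x u : E} {r : ℝ} (hr : 0 ≤ r) (hz : x + r • u ∈ strictCsupport P) :
    ENNReal.ofReal r < rayRadius P x u := by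
  obtain ⟨t, hrt, hmem⟩ := exists_lt_mem_Csupport_of_mem_strictCsupport hz
  exact ((ENNReal.ofReal_lt_ofReal_iff (hr.trans_lt hrt)).2 hrt).trans_le
    (ofReal_le_rayRadius (hr.trans_lt hrt) hmem)

variable [IsProbabilityMeasure P]

lemma exists_eOut_eq_EDepth (hP₁ : NotConcentratedOnHyperplane P)
    (hP : Integrable (fun y : E => y) P) {u : E} (hu : ‖u‖ = 1) (z : E) :
    ∃ w, ‖w‖ = 1 ∧ EDepth P z = eOut P z w := by
  have hcont : ContinuousOn (eOut P z) (Metric.sphere 0 1) := by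
    refine ((continuousOn_integral_comp_inner_sub hP z continuous_negPart ?_).div
      (continuousOn_integral_comp_inner_sub hP z continuous_abs fun x => (abs_abs x).le)
      fun w hw => (integral_abs_inner_sub_pos hP₁ hP (mem_sphere_zero_iff_norm.1 hw) z).ne').congr
      fun w _ => eOut_eq_div z w
    intro x
    rw [abs_of_nonneg (negPart_nonneg x), ← posPart_add_negPart]
    exact le_add_of_nonneg_left (posPart_nonneg x)
  obtain ⟨w, hw, hmin⟩ := (isCompact_sphere (0 : E) 1).exists_isMinOn
    ⟨u, mem_sphere_zero_iff_norm.2 hu⟩ hcont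
  have : Nonempty {v : E // ‖v‖ = 1} := ⟨⟨u, hu⟩⟩
  refine ⟨w, mem_sphere_zero_iff_norm.1 hw,
    le_antisymm (EDepth_le_eOut z (mem_sphere_zero_iff_norm.1 hw)) ?_⟩
  exact le_ciInf fun v => hmin (mem_sphere_zero_iff_norm.2 v.2)

/- A minimizing direction at the nearer point either points against `u`, and then the
one-dimensional comparison applies, or it has outlyingness at least `1/2`, which `-u` beats at
the farther point. -/
lemma EDepth_lt_of_mem_strictCsupport (hP₁ : NotConcentratedOnHyperplane P)
    (hP : Integrable (fun y : E => y) P) {u : E} (hu : ‖u‖ = 1) {r s : ℝ} (hr : 0 ≤ r)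
    (hrs : r < s) (hz : (∫ y, y ∂P) + r • u ∈ strictCsupport P) :
    EDepth P ((∫ y, y ∂P) + s • u) < EDepth P ((∫ y, y ∂P) + r • u) := by
  obtain ⟨w, hw, hEw⟩ := exists_eOut_eq_EDepth hP₁ hP hu ((∫ y, y ∂P) + r • u)
  rw [hEw]
  rcases lt_or_ge ⟪w, u⟫ 0 with hwu | hwu
  · exact (EDepth_le_eOut _ hw).trans_lt (eOut_lt_eOut_of_inner_neg hP hwu hr hrs (hz w hw))
  calc EDepth P ((∫ y, y ∂P) + s • u) ≤ eOut P ((∫ y, y ∂P) + s • u) (-u) :=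
        EDepth_le_eOut _ (by rw [norm_neg, hu])
    _ < 1 / 2 := eOut_lt_half hP <| by
        rw [inner_sub_add_smul_self, inner_neg_left, real_inner_self_eq_norm_sq, hu]
        linarith
    _ ≤ eOut P ((∫ y, y ∂P) + r • u) w := half_le_eOut hP₁ hP hw <| by
        rw [inner_sub_add_smul_self, neg_nonpos]
        exact mul_nonneg hr hwu

end FiniteDimensional

end ExpectileDepth

open ExpectileDepth

theorem stmt_15_general {d : ℕ}
    (P : Measure (EuclideanSpace ℝ (Fin d))) [IsProbabilityMeasure P]
    (hmom : Integrable (fun y : EuclideanSpace ℝ (Fin d) => y) P)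
    (hP1 : ∀ u : EuclideanSpace ℝ (Fin d), ‖u‖ = 1 → ∀ c : ℝ, P {z | ⟪u, z⟫ = c} < 1)
    (u : EuclideanSpace ℝ (Fin d)) (hu : ‖u‖ = 1)
    (μP : EuclideanSpace ℝ (Fin d)) (hμP : μP = ∫ y, y ∂P)
    (ru : ℝ≥0∞)
    (hru : ru = ⨆ (s : ℝ) (_ : 0 < s ∧ μP + s • u ∈ Csupport P), ENNReal.ofReal s) :
    0 < ru ∧
    (∀ r s : ℝ, 0 ≤ r → r < s → ENNReal.ofReal s ≤ ru →
      EDepth P (μP + s • u) < EDepth P (μP + r • u)) ∧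
    (∀ r : ℝ, 0 ≤ r → ru ≤ ENNReal.ofReal r → EDepth P (μP + r • u) = 0) := by
  subst hμP
  obtain rfl : ru = rayRadius P (∫ y, y ∂P) u := hru
  refine ⟨?_, fun r s hr hrs hs => ?_, fun r hr hle => ?_⟩
  · simpa using ofReal_lt_rayRadius le_rfl (by simpa using integral_mem_strictCsupport hP1 hmom)
  · obtain ⟨t, hrt, hmem⟩ := exists_lt_mem_Csupport_of_ofReal_lt_rayRadius
      (((ENNReal.ofReal_lt_ofReal_iff (hr.trans_lt hrs)).2 hrs).trans_le hs)
    exact EDepth_lt_of_mem_strictCsupport hP1 hmom hu hr hrs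
      (mem_strictCsupport_of_mem_Csupport hP1 hmom hr hrt hmem)
  · exact EDepth_eq_zero_of_notMem_strictCsupport fun hz => (ofReal_lt_rayRadius hr hz).not_ge hle

theorem stmt_15 {d : ℕ} (hd : 0 < d)
    (P : Measure (EuclideanSpace ℝ (Fin d))) [IsProbabilityMeasure P]
    (hmom : Integrable (fun y : EuclideanSpace ℝ (Fin d) => y) P)
    (hP1 : ∀ u : EuclideanSpace ℝ (Fin d), ‖u‖ = 1 → ∀ c : ℝ, P {z | ⟪u, z⟫ = c} < 1)
    (u : EuclideanSpace ℝ (Fin d)) (hu : ‖u‖ = 1)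
    (μP : EuclideanSpace ℝ (Fin d)) (hμP : μP = ∫ y, y ∂P)
    (ru : ℝ≥0∞)
    (hru : ru = ⨆ (s : ℝ) (_ : 0 < s ∧ μP + s • u ∈ Csupport P), ENNReal.ofReal s) :
    0 < ru ∧
    (∀ r s : ℝ, 0 ≤ r → r < s → ENNReal.ofReal s ≤ ru →
      EDepth P (μP + s • u) < EDepth P (μP + r • u)) ∧
    (∀ r : ℝ, 0 ≤ r → ru ≤ ENNReal.ofReal r → EDepth P (μP + r • u) = 0) :=
  stmt_15_general P hmom hP1 u hu μP hμP ru hru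
end
end

section
/- Let ρ(t) = t² and let X and Y be random d-vectors defined on a common probability space whose laws (and the law of X+Y) belong to 𝒫^ρ_d. Then: (i) (subadditivity) for every α ∈ (0,1/2] and every u ∈ S^{d−1}, H^ρ_{α,u}(X+Y) ⊆ H^ρ_{α,u}(X) ⊕ H^ρ_{α,u}(Y); (ii) (superadditivity) for every α ∈ [1/2,1) and every u ∈ S^{d−1}, H^ρ_{α,u}(X) ⊕ H^ρ_{α,u}(Y) ⊆ H^ρ_{α,u}(X+Y), where ⊕ denotes the Minkowski sum of subsets of ℝ^d. -/
open MeasureTheory Set Filter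
open scoped RealInnerProductSpace Pointwise

noncomputable section

/-- For the quadratic loss `ρ(t) = t²`:
`G_Q(θ) = E_Q[|Y−θ|·𝟙[Y ≤ θ]] / E_Q[|Y−θ|]`. -/
def Gexp (Q : Measure ℝ) (θ : ℝ) : ℝ :=
  (∫ y, |y - θ| * (if y ≤ θ then 1 else 0) ∂Q) / ∫ y, |y - θ| ∂Q

/-- The univariate order-`α` expectile `θ^ρ_α(Q) = inf{θ : G_Q(θ) ≥ α}`. -/
def expectileQ (Q : Measure ℝ) (α : ℝ) : ℝ :=
  sInf {θ : ℝ | α ≤ Gexp Q θ}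

/-- The order-`α` expectile halfspace of a random vector `X` in direction `u`:
`H^ρ_{α,u}(X) = {z : u'z ≥ θ^ρ_α(law of u'X)}`. -/
def expHalf {d : ℕ} {Ω : Type*} [MeasurableSpace Ω] (μ : Measure Ω)
    (X : Ω → EuclideanSpace ℝ (Fin d)) (α : ℝ) (u : EuclideanSpace ℝ (Fin d)) :
    Set (EuclideanSpace ℝ (Fin d)) :=
  {z | expectileQ (μ.map fun ω => ⟪u, X ω⟫) α ≤ ⟪u, z⟫}

/-!
Writing `ψ_α(x) = α x⁺ − (1−α) x⁻` (`expectileIdent`), the condition `α ≤ G_Q(θ)` is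
equivalent to `F(θ) := E ψ_α(W − θ) ≤ 0` (`expectileIdentMean`) whenever `W` is not a.s.
constant, so the expectile of `W` is the unique zero of the strictly decreasing, `1`-Lipschitz
function `F`. For `α ≤ 1/2` the map `ψ_α` is superadditive, hence
`F_{U+V}(a + b) ≥ F_U(a) + F_V(b) = 0` at the expectiles `a`, `b` of `U`, `V`, which puts `a + b`
below the expectile of `U + V`; for `α ≥ 1/2` it is subadditive and the inequality reverses.
Applied to `U = u'X`, `V = u'Y`, this compares the thresholds of the halfspaces, and for a unit
vector `u` the Minkowski sum of `{u'z ≥ a}` and `{u'z ≥ b}` is `{u'z ≥ a + b}`.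
-/

def expectileIdent (α x : ℝ) : ℝ := if 0 ≤ x then α * x else (1 - α) * x

lemma expectileIdent_eq_max (α x : ℝ) :
    expectileIdent α x = α * max x 0 - (1 - α) * max (-x) 0 := by
  unfold expectileIdent
  rcases le_or_gt 0 x with h | h
  · rw [if_pos h, max_eq_left h, max_eq_right (by linarith : -x ≤ 0)]; ring
  · rw [if_neg (not_le.2 h), max_eq_right h.le, max_eq_left (by linarith : (0:ℝ) ≤ -x)]; ring

lemma le_expectileIdent_add {α : ℝ} (hα : α ≤ 1 / 2) (s t : ℝ) :
    expectileIdent α s + expectileIdent α t ≤ expectileIdent α (s + t) := by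
  unfold expectileIdent; split_ifs <;> nlinarith

lemma expectileIdent_add_le {α : ℝ} (hα : 1 / 2 ≤ α) (s t : ℝ) :
    expectileIdent α (s + t) ≤ expectileIdent α s + expectileIdent α t := by
  unfold expectileIdent; split_ifs <;> nlinarith

lemma mul_sub_le_expectileIdent_sub (α : ℝ) {s t : ℝ} (h : t ≤ s) :
    min α (1 - α) * (s - t) ≤ expectileIdent α s - expectileIdent α t := by
  have := min_le_left α (1 - α)
  have := min_le_right α (1 - α)
  unfold expectileIdent; split_ifs <;> nlinarith

lemma expectileIdent_sub_le {α : ℝ} (h0 : 0 ≤ α) (h1 : α ≤ 1) {s t : ℝ} (h : t ≤ s) :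
    expectileIdent α s - expectileIdent α t ≤ s - t := by
  unfold expectileIdent; split_ifs <;> nlinarith

section Decay

variable {F : ℝ → ℝ} {c : ℝ}

lemma nonempty_setOf_nonpos_of_decay (hc : 0 < c)
    (hdec : ∀ θ₁ θ₂ : ℝ, θ₁ ≤ θ₂ → F θ₂ + c * (θ₂ - θ₁) ≤ F θ₁) :
    {θ | F θ ≤ 0}.Nonempty := by
  refine ⟨max 0 (F 0 / c), ?_⟩
  have h := hdec 0 (max 0 (F 0 / c)) (le_max_left _ _)
  have : F 0 ≤ c * max 0 (F 0 / c) := by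
    rw [← div_le_iff₀' hc]; exact le_max_right _ _
  simp only [mem_ofPred_eq]
  linarith

lemma bddBelow_setOf_nonpos_of_decay (hc : 0 < c)
    (hdec : ∀ θ₁ θ₂ : ℝ, θ₁ ≤ θ₂ → F θ₂ + c * (θ₂ - θ₁) ≤ F θ₁) :
    BddBelow {θ | F θ ≤ 0} := by
  refine ⟨min 0 (F 0 / c), fun θ (hθ : F θ ≤ 0) => ?_⟩
  rcases le_or_gt 0 θ with h | h
  · exact (min_le_left _ _).trans h
  · have := hdec θ 0 h.le
    refine (min_le_right _ _).trans ((div_le_iff₀ hc).2 ?_)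
    nlinarith

lemma le_sInf_setOf_nonpos_of_decay (hc : 0 < c)
    (hdec : ∀ θ₁ θ₂ : ℝ, θ₁ ≤ θ₂ → F θ₂ + c * (θ₂ - θ₁) ≤ F θ₁) {θ : ℝ}
    (hθ : 0 ≤ F θ) : θ ≤ sInf {θ | F θ ≤ 0} := by
  refine le_csInf (nonempty_setOf_nonpos_of_decay hc hdec) fun t (ht : F t ≤ 0) => ?_
  by_contra! hlt
  have := hdec t θ hlt.le
  nlinarith

lemma apply_sInf_setOf_nonpos_of_decay (hc : 0 < c)
    (hdec : ∀ θ₁ θ₂ : ℝ, θ₁ ≤ θ₂ → F θ₂ + c * (θ₂ - θ₁) ≤ F θ₁)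
    (hlip : ∀ θ₁ θ₂ : ℝ, θ₁ ≤ θ₂ → F θ₁ ≤ F θ₂ + (θ₂ - θ₁)) :
    F (sInf {θ | F θ ≤ 0}) = 0 := by
  set s := sInf {θ | F θ ≤ 0}
  have hbdd := bddBelow_setOf_nonpos_of_decay hc hdec
  apply le_antisymm
  · by_contra! hpos
    obtain ⟨t, ht, hts⟩ := exists_lt_of_csInf_lt (nonempty_setOf_nonpos_of_decay hc hdec)
      (show s < s + F s by linarith)
    have := hlip s t (csInf_le hbdd ht)
    have : F t ≤ 0 := ht
    linarith
  · by_contra! hneg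
    have hleft : s + F s ∉ {θ | F θ ≤ 0} := notMem_of_lt_csInf (by linarith) hbdd
    have := hlip (s + F s) s (by linarith)
    simp only [mem_ofPred_eq, not_le] at hleft
    linarith

end Decay

section ExpectileIdentMean

variable {Ω : Type*} [MeasurableSpace Ω] (μ : Measure Ω)

def expectileIdentMean (W : Ω → ℝ) (α θ : ℝ) : ℝ := ∫ ω, expectileIdent α (W ω - θ) ∂μ

variable {μ} {W : Ω → ℝ} {α : ℝ}

lemma integrable_pos_part_sub_const [IsFiniteMeasure μ] (hW : Integrable W μ) (θ : ℝ) :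
    Integrable (fun ω => max (W ω - θ) 0) μ :=
  (hW.sub (integrable_const θ)).pos_part

lemma integrable_pos_part_const_sub [IsFiniteMeasure μ] (hW : Integrable W μ) (θ : ℝ) :
    Integrable (fun ω => max (θ - W ω) 0) μ :=
  ((integrable_const θ).sub hW).pos_part

lemma integrable_expectileIdent [IsFiniteMeasure μ] (hW : Integrable W μ) (θ : ℝ) :
    Integrable (fun ω => expectileIdent α (W ω - θ)) μ := by
  simp only [expectileIdent_eq_max, neg_sub]
  exact (integrable_pos_part_sub_const hW θ).const_mul α |>.sub <|
    (integrable_pos_part_const_sub hW θ).const_mul (1 - α)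

lemma expectileIdentMean_eq [IsFiniteMeasure μ] (hW : Integrable W μ) (θ : ℝ) :
    expectileIdentMean μ W α θ =
      α * ∫ ω, max (W ω - θ) 0 ∂μ - (1 - α) * ∫ ω, max (θ - W ω) 0 ∂μ := by
  simp only [expectileIdentMean, expectileIdent_eq_max, neg_sub]
  rw [integral_sub ((integrable_pos_part_sub_const hW θ).const_mul α)
      ((integrable_pos_part_const_sub hW θ).const_mul (1 - α)),
    integral_const_mul, integral_const_mul]

variable [IsProbabilityMeasure μ]

lemma integral_add_const_eq (f : Ω → ℝ) (hf : Integrable f μ) (k : ℝ) :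
    ∫ ω, (f ω + k) ∂μ = ∫ ω, f ω ∂μ + k := by
  rw [integral_add hf (integrable_const k), integral_const, probReal_univ, one_smul]

lemma expectileIdentMean_add_mul_le (hW : Integrable W μ)
    {θ₁ θ₂ : ℝ} (h : θ₁ ≤ θ₂) :
    expectileIdentMean μ W α θ₂ + min α (1 - α) * (θ₂ - θ₁) ≤ expectileIdentMean μ W α θ₁ := by
  unfold expectileIdentMean
  rw [← integral_add_const_eq _ (integrable_expectileIdent hW θ₂)]
  refine integral_mono ((integrable_expectileIdent hW θ₂).add (integrable_const _))
    (integrable_expectileIdent hW θ₁) fun ω => ?_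
  have := mul_sub_le_expectileIdent_sub α (show W ω - θ₂ ≤ W ω - θ₁ by linarith)
  simp only [sub_sub_sub_cancel_left] at this
  linarith

lemma expectileIdentMean_le_add (hW : Integrable W μ) (h0 : 0 ≤ α) (h1 : α ≤ 1)
    {θ₁ θ₂ : ℝ} (h : θ₁ ≤ θ₂) :
    expectileIdentMean μ W α θ₁ ≤ expectileIdentMean μ W α θ₂ + (θ₂ - θ₁) := by
  unfold expectileIdentMean
  rw [← integral_add_const_eq _ (integrable_expectileIdent hW θ₂)]
  refine integral_mono (integrable_expectileIdent hW θ₁)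
    ((integrable_expectileIdent hW θ₂).add (integrable_const _)) fun ω => ?_
  have := expectileIdent_sub_le h0 h1 (show W ω - θ₂ ≤ W ω - θ₁ by linarith)
  simp only [sub_sub_sub_cancel_left] at this
  linarith

lemma expectileIdentMean_sInf_eq_zero (hW : Integrable W μ) (h0 : 0 < α) (h1 : α < 1) :
    expectileIdentMean μ W α (sInf {θ | expectileIdentMean μ W α θ ≤ 0}) = 0 :=
  apply_sInf_setOf_nonpos_of_decay (lt_min h0 (by linarith))
    (fun _ _ => expectileIdentMean_add_mul_le hW)
    (fun _ _ => expectileIdentMean_le_add hW h0.le h1.le)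

lemma le_sInf_expectileIdentMean {θ : ℝ} (hW : Integrable W μ) (h0 : 0 < α) (h1 : α < 1)
    (hθ : 0 ≤ expectileIdentMean μ W α θ) :
    θ ≤ sInf {θ | expectileIdentMean μ W α θ ≤ 0} :=
  le_sInf_setOf_nonpos_of_decay (lt_min h0 (by linarith))
    (fun _ _ => expectileIdentMean_add_mul_le hW) hθ

lemma sInf_expectileIdentMean_le {θ : ℝ} (hW : Integrable W μ) (h0 : 0 < α) (h1 : α < 1)
    (hθ : expectileIdentMean μ W α θ ≤ 0) :
    sInf {θ | expectileIdentMean μ W α θ ≤ 0} ≤ θ :=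
  csInf_le (bddBelow_setOf_nonpos_of_decay (lt_min h0 (by linarith))
    (fun _ _ => expectileIdentMean_add_mul_le hW)) hθ

end ExpectileIdentMean

section Expectile

variable {Ω : Type*} [MeasurableSpace Ω] {μ : Measure Ω} {W : Ω → ℝ} {α : ℝ}

lemma Gexp_map (hW : AEMeasurable W μ) (θ : ℝ) :
    Gexp (μ.map W) θ = (∫ ω, max (θ - W ω) 0 ∂μ) / ∫ ω, |W ω - θ| ∂μ := by
  have hlower : ∀ y : ℝ, |y - θ| * (if y ≤ θ then 1 else 0) = max (θ - y) 0 := fun y => by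
    split_ifs with h
    · rw [mul_one, abs_of_nonpos (by linarith), max_eq_left (by linarith), neg_sub]
    · rw [mul_zero, max_eq_right (by linarith)]
  unfold Gexp
  simp only [hlower]
  rw [integral_map hW (by fun_prop), integral_map hW (by fun_prop)]

variable [IsProbabilityMeasure μ]

lemma integral_abs_sub_eq (hW : Integrable W μ) (θ : ℝ) :
    ∫ ω, |W ω - θ| ∂μ = ∫ ω, max (W ω - θ) 0 ∂μ + ∫ ω, max (θ - W ω) 0 ∂μ := by
  simp only [← max_zero_add_max_neg_zero_eq_abs_self, neg_sub]
  exact integral_add (integrable_pos_part_sub_const hW θ) (integrable_pos_part_const_sub hW θ)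

lemma integral_abs_sub_pos (hW : Integrable W μ) (hnd : ∀ c : ℝ, μ {ω | W ω = c} < 1)
    (θ : ℝ) : 0 < ∫ ω, |W ω - θ| ∂μ := by
  have hint : Integrable (fun ω => |W ω - θ|) μ := (hW.sub (integrable_const θ)).abs
  rw [integral_pos_iff_support_of_nonneg (fun ω => abs_nonneg _) hint]
  have hsupp : Function.support (fun ω => |W ω - θ|) = {ω | W ω = θ}ᶜ := by
    ext ω; simp [sub_eq_zero]
  rw [hsupp, pos_iff_ne_zero]
  intro hzero
  have hcover : μ univ ≤ μ {ω | W ω = θ} + μ {ω | W ω = θ}ᶜ := by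
    rw [← union_compl_self {ω | W ω = θ}]; exact measure_union_le _ _
  rw [hzero, add_zero, measure_univ] at hcover
  exact (hnd θ).not_ge hcover

lemma expectileQ_map_eq_sInf (hW : Integrable W μ) (hnd : ∀ c : ℝ, μ {ω | W ω = c} < 1) :
    expectileQ (μ.map W) α = sInf {θ | expectileIdentMean μ W α θ ≤ 0} := by
  unfold expectileQ
  congr 1
  ext θ
  rw [mem_ofPred_eq, mem_ofPred_eq, Gexp_map hW.aemeasurable, expectileIdentMean_eq hW,
    le_div_iff₀ (integral_abs_sub_pos hW hnd θ), integral_abs_sub_eq hW]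
  constructor <;> intro h <;> linarith

end Expectile

section Additivity

variable {Ω : Type*} [MeasurableSpace Ω] {μ : Measure Ω} [IsProbabilityMeasure μ]
  {U V : Ω → ℝ} {α : ℝ}

lemma le_expectileIdentMean_add (hU : Integrable U μ) (hV : Integrable V μ) (hα : α ≤ 1 / 2)
    (a b : ℝ) :
    expectileIdentMean μ U α a + expectileIdentMean μ V α b ≤
      expectileIdentMean μ (fun ω => U ω + V ω) α (a + b) := by
  unfold expectileIdentMean
  rw [← integral_add (integrable_expectileIdent hU a) (integrable_expectileIdent hV b)]
  refine integral_mono ((integrable_expectileIdent hU a).add (integrable_expectileIdent hV b))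
    (integrable_expectileIdent (hU.add hV) (a + b)) fun ω => ?_
  have := le_expectileIdent_add hα (U ω - a) (V ω - b)
  rwa [sub_add_sub_comm] at this

lemma expectileIdentMean_add_le (hU : Integrable U μ) (hV : Integrable V μ) (hα : 1 / 2 ≤ α)
    (a b : ℝ) :
    expectileIdentMean μ (fun ω => U ω + V ω) α (a + b) ≤
      expectileIdentMean μ U α a + expectileIdentMean μ V α b := by
  unfold expectileIdentMean
  rw [← integral_add (integrable_expectileIdent hU a) (integrable_expectileIdent hV b)]
  refine integral_mono (integrable_expectileIdent (hU.add hV) (a + b))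
    ((integrable_expectileIdent hU a).add (integrable_expectileIdent hV b)) fun ω => ?_
  have := expectileIdent_add_le hα (U ω - a) (V ω - b)
  rwa [sub_add_sub_comm] at this

lemma add_expectileQ_map_le (hU : Integrable U μ) (hV : Integrable V μ)
    (hndU : ∀ c : ℝ, μ {ω | U ω = c} < 1) (hndV : ∀ c : ℝ, μ {ω | V ω = c} < 1)
    (hndUV : ∀ c : ℝ, μ {ω | U ω + V ω = c} < 1)
    (hα0 : 0 < α) (hα : α ≤ 1 / 2) :
    expectileQ (μ.map U) α + expectileQ (μ.map V) α ≤
      expectileQ (μ.map fun ω => U ω + V ω) α := by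
  have hα1 : α < 1 := by linarith
  rw [expectileQ_map_eq_sInf hU hndU, expectileQ_map_eq_sInf hV hndV,
    expectileQ_map_eq_sInf (W := fun ω => U ω + V ω) (hU.add hV) hndUV]
  refine le_sInf_expectileIdentMean (hU.add hV) hα0 hα1 ?_
  calc (0 : ℝ) = expectileIdentMean μ U α (sInf {θ | expectileIdentMean μ U α θ ≤ 0}) +
        expectileIdentMean μ V α (sInf {θ | expectileIdentMean μ V α θ ≤ 0}) := by
        rw [expectileIdentMean_sInf_eq_zero hU hα0 hα1,
          expectileIdentMean_sInf_eq_zero hV hα0 hα1, add_zero]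
    _ ≤ _ := le_expectileIdentMean_add hU hV hα _ _

lemma expectileQ_map_add_le (hU : Integrable U μ) (hV : Integrable V μ)
    (hndU : ∀ c : ℝ, μ {ω | U ω = c} < 1) (hndV : ∀ c : ℝ, μ {ω | V ω = c} < 1)
    (hndUV : ∀ c : ℝ, μ {ω | U ω + V ω = c} < 1)
    (hα : 1 / 2 ≤ α) (hα1 : α < 1) :
    expectileQ (μ.map fun ω => U ω + V ω) α ≤
      expectileQ (μ.map U) α + expectileQ (μ.map V) α := by
  have hα0 : 0 < α := by linarith
  rw [expectileQ_map_eq_sInf hU hndU, expectileQ_map_eq_sInf hV hndV,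
    expectileQ_map_eq_sInf (W := fun ω => U ω + V ω) (hU.add hV) hndUV]
  refine sInf_expectileIdentMean_le (hU.add hV) hα0 hα1 ?_
  calc _ ≤ expectileIdentMean μ U α (sInf {θ | expectileIdentMean μ U α θ ≤ 0}) +
        expectileIdentMean μ V α (sInf {θ | expectileIdentMean μ V α θ ≤ 0}) :=
        expectileIdentMean_add_le hU hV hα _ _
    _ = 0 := by
        rw [expectileIdentMean_sInf_eq_zero hU hα0 hα1,
          expectileIdentMean_sInf_eq_zero hV hα0 hα1, add_zero]

end Additivity

lemma setOf_le_inner_add_setOf_le_inner {E : Type*} [NormedAddCommGroup E]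
    [InnerProductSpace ℝ E] {u : E} (hu : ‖u‖ = 1) (a b : ℝ) :
    {z : E | a ≤ ⟪u, z⟫} + {z | b ≤ ⟪u, z⟫} = {z | a + b ≤ ⟪u, z⟫} := by
  have hself : ⟪u, u⟫ = 1 := by rw [real_inner_self_eq_norm_sq, hu, one_pow]
  ext z
  constructor
  · rintro ⟨x, hx, y, hy, rfl⟩
    simp only [mem_ofPred_eq, inner_add_right] at hx hy ⊢
    linarith
  · intro hz
    simp only [mem_ofPred_eq] at hz
    refine ⟨z - (⟪u, z⟫ - a) • u, ?_, (⟪u, z⟫ - a) • u, ?_, sub_add_cancel _ _⟩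
    · simp only [mem_ofPred_eq, inner_sub_right, real_inner_smul_right, hself]
      linarith
    · simp only [mem_ofPred_eq, real_inner_smul_right, hself]
      linarith

theorem stmt_19_general {d : ℕ} {Ω : Type*} [MeasurableSpace Ω]
    (μ : Measure Ω) [IsProbabilityMeasure μ]
    (X Y : Ω → EuclideanSpace ℝ (Fin d))
    (hXmom : Integrable X μ) (hYmom : Integrable Y μ)
    (hXhyp : ∀ u : EuclideanSpace ℝ (Fin d), ‖u‖ = 1 → ∀ c : ℝ,
      μ {ω | ⟪u, X ω⟫ = c} < 1)
    (hYhyp : ∀ u : EuclideanSpace ℝ (Fin d), ‖u‖ = 1 → ∀ c : ℝ,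
      μ {ω | ⟪u, Y ω⟫ = c} < 1)
    (hXYhyp : ∀ u : EuclideanSpace ℝ (Fin d), ‖u‖ = 1 → ∀ c : ℝ,
      μ {ω | ⟪u, X ω + Y ω⟫ = c} < 1) :
    (∀ α : ℝ, 0 < α → α ≤ 1 / 2 →
      ∀ u : EuclideanSpace ℝ (Fin d), ‖u‖ = 1 →
        expHalf μ (fun ω => X ω + Y ω) α u ⊆ expHalf μ X α u + expHalf μ Y α u) ∧
    (∀ α : ℝ, 1 / 2 ≤ α → α < 1 →
      ∀ u : EuclideanSpace ℝ (Fin d), ‖u‖ = 1 →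
        expHalf μ X α u + expHalf μ Y α u ⊆ expHalf μ (fun ω => X ω + Y ω) α u) := by
  have hsum (α : ℝ) (u : EuclideanSpace ℝ (Fin d)) : expHalf μ (fun ω => X ω + Y ω) α u =
      {z | expectileQ (μ.map fun ω => ⟪u, X ω⟫ + ⟪u, Y ω⟫) α ≤ ⟪u, z⟫} := by
    simp only [expHalf, inner_add_right]
  have hndXY (u : EuclideanSpace ℝ (Fin d)) (hu : ‖u‖ = 1) (c : ℝ) :
      μ {ω | ⟪u, X ω⟫ + ⟪u, Y ω⟫ = c} < 1 := by
    simpa only [inner_add_right] using hXYhyp u hu c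
  refine ⟨fun α hα0 hα u hu => ?_, fun α hα hα1 u hu => ?_⟩
  · rw [hsum, expHalf, expHalf, setOf_le_inner_add_setOf_le_inner hu]
    exact ofPred_subset_ofPred.2 fun z => (add_expectileQ_map_le (hXmom.const_inner u)
      (hYmom.const_inner u) (hXhyp u hu) (hYhyp u hu) (hndXY u hu) hα0 hα).trans
  · rw [hsum, expHalf, expHalf, setOf_le_inner_add_setOf_le_inner hu]
    exact ofPred_subset_ofPred.2 fun z => (expectileQ_map_add_le (hXmom.const_inner u)
      (hYmom.const_inner u) (hXhyp u hu) (hYhyp u hu) (hndXY u hu) hα hα1).trans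

theorem stmt_19 {d : ℕ} (hd : 0 < d) {Ω : Type*} [MeasurableSpace Ω]
    (μ : Measure Ω) [IsProbabilityMeasure μ]
    (X Y : Ω → EuclideanSpace ℝ (Fin d))
    (hXmeas : Measurable X) (hYmeas : Measurable Y)
    (hXmom : Integrable X μ) (hYmom : Integrable Y μ)
    (hXhyp : ∀ u : EuclideanSpace ℝ (Fin d), ‖u‖ = 1 → ∀ c : ℝ,
      μ {ω | ⟪u, X ω⟫ = c} < 1)
    (hYhyp : ∀ u : EuclideanSpace ℝ (Fin d), ‖u‖ = 1 → ∀ c : ℝ,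
      μ {ω | ⟪u, Y ω⟫ = c} < 1)
    (hXYhyp : ∀ u : EuclideanSpace ℝ (Fin d), ‖u‖ = 1 → ∀ c : ℝ,
      μ {ω | ⟪u, X ω + Y ω⟫ = c} < 1) :
    (∀ α : ℝ, 0 < α → α ≤ 1 / 2 →
      ∀ u : EuclideanSpace ℝ (Fin d), ‖u‖ = 1 →
        expHalf μ (fun ω => X ω + Y ω) α u ⊆ expHalf μ X α u + expHalf μ Y α u) ∧
    (∀ α : ℝ, 1 / 2 ≤ α → α < 1 →
      ∀ u : EuclideanSpace ℝ (Fin d), ‖u‖ = 1 →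
        expHalf μ X α u + expHalf μ Y α u ⊆ expHalf μ (fun ω => X ω + Y ω) α u) :=
  stmt_19_general μ X Y hXmom hYmom hXhyp hYhyp hXYhyp
end
end
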